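/- Let q > 0, v > 0, r > 0, f ≥ 0 be real numbers with Δ ≥ (1+r)·√(1+f). Then ∫₀^{Δ²−1} 2·q·v·f·min{1+r, ((1+r)/r)·max{0, √((1+δ)/(1+f)) − 1}} · (1/(2Δ·√(1+δ))) dδ = q·v·f·(1+r)·(2Δ − (r+2)·√(1+f))/Δ; that is, the expected fee revenue of a liquidity provider with endowment q equals q·𝓛(f), where 𝓛(f) = v·f·(1+r)·(2Δ − (r+2)·√(1+f))/Δ is the liquidity yield. -/

import Mathlib

/-!
Substituting `u = √(1 + δ)` turns the shock density into `du` on `[1, Δ]`. In `u` the fee revenue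
is a ramp that vanishes up to `√(1 + f)`, rises linearly and is capped at `1 + r` from
`(1 + r) √(1 + f)` on, so the expectation is the area of a trapezoid.
-/

open Set intervalIntegral

theorem integral_sqrt_one_add_substitution {a b : ℝ} (ha : -1 ≤ a) (hb : -1 ≤ b) (g : ℝ → ℝ) :
    ∫ δ in a..b, g (√(1 + δ)) * (1 / (2 * √(1 + δ))) = ∫ u in √(1 + a)..√(1 + b), g u := by
  refine integral_comp_mul_deriv_of_deriv_nonneg (f := fun δ ↦ √(1 + δ)) (by fun_prop)
    (fun x hx ↦ ?_) (fun x _ ↦ by positivity)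
  have hx : 1 + x ≠ 0 := by linarith [le_min ha hb, hx.1]
  simpa using ((hasDerivAt_id x).const_add 1).sqrt hx

theorem integral_min_ramp {H a b x y : ℝ} (hH : 0 ≤ H) (hxa : x ≤ a) (hab : a < b)
    (hby : b ≤ y) :
    ∫ u in x..y, min H (H / (b - a) * max 0 (u - a)) = H * (y - (a + b) / 2) := by
  have hint (c d : ℝ) :
      IntervalIntegrable (fun u ↦ min H (H / (b - a) * max 0 (u - a)))
        MeasureTheory.volume c d :=
    (by fun_prop : Continuous _).intervalIntegrable c d
  have hba : 0 < b - a := sub_pos.2 hab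
  have flat : ∫ u in x..a, min H (H / (b - a) * max 0 (u - a)) = 0 := by
    refine (integral_congr fun u hu ↦ ?_).trans integral_zero
    rw [uIcc_of_le hxa] at hu
    simp [max_eq_left (sub_nonpos.2 hu.2), hH]
  have rising : ∫ u in a..b, min H (H / (b - a) * max 0 (u - a)) = H * (b - a) / 2 := by
    rw [integral_congr (g := fun u ↦ H / (b - a) * (u - a)) fun u hu ↦ ?_]
    · rw [integral_const_mul, integral_comp_sub_right (fun u ↦ u), integral_id]
      field_simp
      ring
    rw [uIcc_of_le hab.le] at hu
    rw [max_eq_right (sub_nonneg.2 hu.1), min_eq_right]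
    rw [div_mul_eq_mul_div, div_le_iff₀ hba]
    exact mul_le_mul_of_nonneg_left (by linarith [hu.2]) hH
  have capped : ∫ u in b..y, min H (H / (b - a) * max 0 (u - a)) = H * (y - b) := by
    rw [integral_congr (g := fun _ ↦ H) fun u hu ↦ ?_, integral_const, smul_eq_mul, mul_comm]
    rw [uIcc_of_le hby] at hu
    rw [max_eq_right (by linarith [hu.1]), min_eq_left]
    rw [div_mul_eq_mul_div, le_div_iff₀ hba]
    exact mul_le_mul_of_nonneg_left (by linarith [hu.1]) hH
  rw [← integral_add_adjacent_intervals (hint x a) (hint a y),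
    ← integral_add_adjacent_intervals (hint a b) (hint b y), flat, rising, capped]
  ring

theorem expected_fee_revenue
    (q v r f Δ : ℝ) (hr : 0 < r) (hf : 0 ≤ f)
    (hΔ : (1 + r) * Real.sqrt (1 + f) ≤ Δ) :
    ∫ δ in (0 : ℝ)..(Δ ^ 2 - 1),
        2 * q * v * f * min (1 + r) ((1 + r) / r * max 0 (Real.sqrt ((1 + δ) / (1 + f)) - 1)) *
          (1 / (2 * Δ * Real.sqrt (1 + δ))) =
      q * (v * f * (1 + r) * (2 * Δ - (r + 2) * Real.sqrt (1 + f)) / Δ) := by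
  set s := √(1 + f) with hs_def
  have hs : 1 ≤ s := Real.one_le_sqrt.2 (by linarith)
  have hΔ0 : 0 < Δ := by nlinarith
  have hrs : s < (1 + r) * s := by nlinarith
  have rescale (t : ℝ) :
      (1 + r) / r * max 0 (t / s - 1) = (1 + r) / ((1 + r) * s - s) * max 0 (t - s) := by
    have hs0 : 0 < s := by positivity
    have hmax : max 0 ((t - s) / s) = max 0 (t - s) / s := by
      rw [← max_div_div_right hs0.le, zero_div]
    rw [div_sub_one hs0.ne', hmax, show (1 + r) * s - s = r * s by ring]
    field_simp
  calc _ = 2 * q * v * f / Δ * ∫ δ in (0 : ℝ)..(Δ ^ 2 - 1),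
        min (1 + r) ((1 + r) / ((1 + r) * s - s) * max 0 (√(1 + δ) - s)) *
          (1 / (2 * √(1 + δ))) := by
        rw [← integral_const_mul]
        refine integral_congr fun δ _ ↦ ?_
        simp only [Real.sqrt_div' _ (by linarith : 0 ≤ 1 + f), ← hs_def, rescale]
        field_simp
    _ = 2 * q * v * f / Δ * ((1 + r) * (Δ - (s + (1 + r) * s) / 2)) := by
        rw [integral_sqrt_one_add_substitution (by norm_num) (by nlinarith)
            (fun u ↦ min (1 + r) ((1 + r) / ((1 + r) * s - s) * max 0 (u - s))),
          add_zero, Real.sqrt_one, add_sub_cancel, Real.sqrt_sq hΔ0.le,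
          integral_min_ramp (by linarith) hs hrs hΔ]
    _ = _ := by
        field_simp
        ring
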